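/- Let G = Q8 × Z/2Z with generating set S = {(±i, 1), (±j, 1), (±ij, 1)}, and let φ_0 = id and φ_1 be inversion on Q8 (both in ξ_{Q8}). Then the map φ(x, ε) = (φ_ε(x), ε) belongs to ξ_{S^{≤2}} but does not belong to ξ_G; in particular ξ_{S^{≤2}} ≠ ξ_G. -/

import Mathlib

/-!
Write `φ(x, ε) = (φ_ε x, ε)`. For `g = (x, ε)` and `s = (y, δ)` the condition
`φ(g s) ∈ {φ(g) s, φ(g) s⁻¹}` reads `φ_{ε+δ}(x y) ∈ {φ_ε(x) y, φ_ε(x) y⁻¹}`. When `δ = 0`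
this is `φ_ε ∈ ξ_{Q₈}`, which holds because every cyclic subgroup of `Q₈` is normal. When
`δ = 1` it mixes `id` and inversion, and holds exactly when `y` has order 4, since all
elements of order 4 in `Q₈` square to the same central element `-1`. Every element of
`S ∪ S²` has `δ = 0` or first coordinate of order 4, whereas `s = (1, 1)` and `x = i` force
`i⁻¹ = i`.
-/

open Pointwise

/-- Identify `Q₈ = QuaternionGroup 2` (with `±i = a 1, a 3`, `±j = xa 0, xa 2`,
`±ij = xa 3, xa 1`) and `ℤ/2ℤ` written multiplicatively. The generating set
`S = {(±i,1), (±j,1), (±ij,1)}` of `G = Q₈ × ℤ/2ℤ`. -/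
def SQ8 : Set (QuaternionGroup 2 × Multiplicative (ZMod 2)) :=
  {p | p.2 = Multiplicative.ofAdd 1 ∧
    (p.1 = .a 1 ∨ p.1 = .a 3 ∨ p.1 = .xa 0 ∨ p.1 = .xa 2 ∨ p.1 = .xa 1 ∨ p.1 = .xa 3)}

/-- The map `φ(x, ε) = (φ_ε x, ε)` where `φ_0 = id` and `φ_1` is inversion on `Q₈`;
it is an involution, hence a permutation. -/
def phiExample : Equiv.Perm (QuaternionGroup 2 × Multiplicative (ZMod 2)) :=
  Function.Involutive.toPerm
    (fun p => (if p.2 = Multiplicative.ofAdd 1 then p.1⁻¹ else p.1, p.2))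
    (by intro p; by_cases h : p.2 = Multiplicative.ofAdd 1 <;> simp [h, Prod.ext_iff, eq_comm])

open Set

local notation "Q₈" => QuaternionGroup 2

local notation "C₂" => Multiplicative (ZMod 2)

def xi {G : Type*} [Group G] (U : Set G) : Set (Equiv.Perm G) :=
  {φ | φ 1 = 1 ∧ ∀ g, ∀ u ∈ U, φ (g * u) = φ g * u ∨ φ (g * u) = φ g * u⁻¹}

theorem xi_univ {G : Type*} [Group G] :
    xi (univ : Set G) =
      {φ | φ 1 = 1 ∧ ∀ g h : G, φ (g * h) = φ g * h ∨ φ (g * h) = φ g * h⁻¹} := by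
  simp [xi]

section Twist

variable {H : Type*} [Group H]

def twist (φ : C₂ → H → H) (p : H × C₂) : H × C₂ := (φ p.2 p.1, p.2)

theorem twist_mul_eq_or_iff (φ : C₂ → H → H) (x y : H) (ε δ : C₂) :
    (twist φ ((x, ε) * (y, δ)) = twist φ (x, ε) * (y, δ) ∨
        twist φ ((x, ε) * (y, δ)) = twist φ (x, ε) * (y, δ)⁻¹) ↔
      (φ (ε * δ) (x * y) = φ ε x * y ∨ φ (ε * δ) (x * y) = φ ε x * y⁻¹) := by
  have hδ : δ⁻¹ = δ := ZMod.neg_eq_self_mod_two (Multiplicative.toAdd δ)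
  simp [twist, Prod.ext_iff, hδ]

def invIf (ε : C₂) (x : H) : H := if ε = Multiplicative.ofAdd 1 then x⁻¹ else x

@[simp]
theorem invIf_one (x : H) : invIf 1 x = x := if_neg (by decide)

@[simp]
theorem invIf_ofAdd_one (x : H) : invIf (Multiplicative.ofAdd 1) x = x⁻¹ := if_pos rfl

end Twist

theorem phiExample_apply (p : Q₈ × C₂) : phiExample p = twist invIf p := rfl

namespace QuaternionGroup

theorem sq_eq_one_or_eq_a_two : ∀ x : Q₈, x ^ 2 = 1 ∨ x ^ 2 = a 2 := by decide

theorem mul_mul_inv_eq_or : ∀ x y : Q₈, x * y * x⁻¹ = y ∨ x * y * x⁻¹ = y⁻¹ := by decide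

theorem mul_inv_rev_eq_or (x y : Q₈) : (x * y)⁻¹ = x⁻¹ * y ∨ (x * y)⁻¹ = x⁻¹ * y⁻¹ := by
  rcases mul_mul_inv_eq_or x y with h | h <;> rw [mul_inv_eq_iff_eq_mul] at h <;> rw [h]
  · exact Or.inr (mul_inv_rev y x)
  · exact Or.inl (by group)

theorem mul_inv_eq_or_of_sq_ne_one (x : Q₈) {y : Q₈} (hy : y ^ 2 ≠ 1) :
    (x * y)⁻¹ = x * y ∨ (x * y)⁻¹ = x * y⁻¹ := by
  have hy : y ^ 2 = a 2 := (sq_eq_one_or_eq_a_two y).resolve_left hy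
  rcases sq_eq_one_or_eq_a_two (x * y) with h | h
  · exact Or.inl (inv_eq_of_mul_eq_one_right (by rw [← sq, h]))
  · right
    calc (x * y)⁻¹ = (x * y)⁻¹ * ((x * y) ^ 2 * (y ^ 2)⁻¹) := by
          rw [h, hy, mul_inv_cancel, mul_one]
      _ = x * y⁻¹ := by simp only [sq]; group

theorem mul_eq_or_of_sq_ne_one (x : Q₈) {y : Q₈} (hy : y ^ 2 ≠ 1) :
    x * y = x⁻¹ * y ∨ x * y = x⁻¹ * y⁻¹ := by
  have hy : y ^ 2 = a 2 := (sq_eq_one_or_eq_a_two y).resolve_left hy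
  have hy4 : y ^ 2 * y ^ 2 = 1 := by rw [hy]; decide
  rcases sq_eq_one_or_eq_a_two x with h | h
  · left
    rw [inv_eq_of_mul_eq_one_right (by rw [← sq, h] : x * x = 1)]
  · right
    calc x * y = x⁻¹ * x ^ 2 * y := by group
      _ = x⁻¹ * y ^ 2 * y := by rw [h, hy]
      _ = x⁻¹ * (y ^ 2 * y ^ 2) * y⁻¹ := by group
      _ = x⁻¹ * y⁻¹ := by rw [hy4, mul_one]

theorem invIf_mul_eq_or (ε : C₂) {δ : C₂} (x : Q₈) {y : Q₈} (h : δ = 1 ∨ y ^ 2 ≠ 1) :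
    invIf (ε * δ) (x * y) = invIf ε x * y ∨ invIf (ε * δ) (x * y) = invIf ε x * y⁻¹ := by
  have hC₂ : ∀ ε : C₂, ε = 1 ∨ ε = Multiplicative.ofAdd 1 := by decide
  rcases hC₂ δ with rfl | rfl
  · rcases hC₂ ε with rfl | rfl
    · simp
    · simpa using mul_inv_rev_eq_or x y
  · have hy : y ^ 2 ≠ 1 := h.resolve_left (by decide)
    rcases hC₂ ε with rfl | rfl
    · simpa using mul_inv_eq_or_of_sq_ne_one x hy
    · have hc : Multiplicative.ofAdd (1 : ZMod 2) * Multiplicative.ofAdd 1 = 1 := by decide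
      simpa [hc] using mul_eq_or_of_sq_ne_one x hy

end QuaternionGroup

theorem sq_ne_one_of_mem_SQ8 {s : Q₈ × C₂} (hs : s ∈ SQ8) : s.1 ^ 2 ≠ 1 := by
  obtain ⟨-, h | h | h | h | h | h⟩ := hs <;> rw [h] <;> decide

theorem snd_eq_one_of_mem_SQ8_mul_SQ8 {s : Q₈ × C₂} (hs : s ∈ SQ8 * SQ8) : s.2 = 1 := by
  obtain ⟨a, ha, b, hb, rfl⟩ := hs
  change a.2 * b.2 = 1
  rw [ha.1, hb.1]
  decide

theorem phiExample_mem_xi : phiExample ∈ xi (SQ8 ∪ SQ8 * SQ8) := by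
  refine ⟨by decide, fun ⟨x, ε⟩ ⟨y, δ⟩ hs => ?_⟩
  simp only [phiExample_apply, twist_mul_eq_or_iff]
  exact QuaternionGroup.invIf_mul_eq_or ε x
    (hs.symm.imp snd_eq_one_of_mem_SQ8_mul_SQ8 sq_ne_one_of_mem_SQ8)

theorem phiExample_not_mem_xi_univ : phiExample ∉ xi (univ : Set (Q₈ × C₂)) := by
  rintro ⟨-, h⟩
  have := h (QuaternionGroup.a 1, 1) (1, Multiplicative.ofAdd 1) trivial
  simp only [phiExample_apply, twist_mul_eq_or_iff] at this
  revert this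
  decide

/-- `φ` belongs to `ξ_{S^{≤2}}` but not to `ξ_G`; in particular `ξ_{S^{≤2}} ≠ ξ_G`. -/
theorem xi_Ssq_ne_xi_of_Q8_times_C2 :
    (phiExample 1 = 1 ∧
      ∀ g : QuaternionGroup 2 × Multiplicative (ZMod 2), ∀ s ∈ SQ8 ∪ SQ8 * SQ8,
        phiExample (g * s) = phiExample g * s ∨
          phiExample (g * s) = phiExample g * s⁻¹) ∧
    ¬ (phiExample 1 = 1 ∧
      ∀ g h : QuaternionGroup 2 × Multiplicative (ZMod 2),
        phiExample (g * h) = phiExample g * h ∨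
          phiExample (g * h) = phiExample g * h⁻¹) ∧
    ({φ : Equiv.Perm (QuaternionGroup 2 × Multiplicative (ZMod 2)) | φ 1 = 1 ∧
        ∀ g : QuaternionGroup 2 × Multiplicative (ZMod 2), ∀ s ∈ SQ8 ∪ SQ8 * SQ8,
          φ (g * s) = φ g * s ∨ φ (g * s) = φ g * s⁻¹}
      ≠ {φ : Equiv.Perm (QuaternionGroup 2 × Multiplicative (ZMod 2)) | φ 1 = 1 ∧
          ∀ g h : QuaternionGroup 2 × Multiplicative (ZMod 2),
            φ (g * h) = φ g * h ∨ φ (g * h) = φ g * h⁻¹}) := by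
  have hS := phiExample_mem_xi
  have hG := phiExample_not_mem_xi_univ
  rw [xi_univ] at hG
  exact ⟨hS, hG, fun h => hG (h ▸ hS)⟩
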